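/- For any constants C, B > 0, any width m, any n, and any points x₁,...,x_n ∈ ℝ^d with ‖x_i‖₂ ≤ B for all i, the class Θ_C = {θ = (W₁, W₂) : Σ_{j=1}^m ‖W_{1,j}‖₂·|W₂[j]| ≤ C} of width-m 2-MLP-No-Bias parameters satisfies R_S({f_θ : θ ∈ Θ_C}) ≤ 2·C·B/√n, where S = {x₁,...,x_n}. -/

import Mathlib

noncomputable section

def relu (t : ℝ) : ℝ := max t 0

/-- Parameters `θ = (W₁, W₂)` of a width-`m` two-layer ReLU MLP without bias on `ℝ^d`. -/
abbrev Params2 (m d : ℕ) : Type :=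
  (Fin m → Fin d → ℝ) × (Fin m → ℝ)

/-- `f_θ(x) = W₂ relu(W₁ x)` for a two-layer ReLU MLP without bias. -/
def mlp2nb {m d : ℕ} (θ : Params2 m d) (x : Fin d → ℝ) : ℝ :=
  ∑ j, θ.2 j * relu (∑ i, θ.1 j i * x i)

/-- Empirical Rademacher complexity of a class `F` of real functions on the sample `x`. -/
def rademacher {α : Type*} (n : ℕ) (F : Set (α → ℝ)) (x : Fin n → α) : ℝ :=
  (∑ ε : Fin n → Bool,
    sSup ((fun f => ∑ i, (if ε i then (1 : ℝ) else -1) * f (x i)) '' F)) / (2 ^ n * n)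

namespace Stmt19

def sg {n : ℕ} (ε : Fin n → Bool) (i : Fin n) : ℝ := if ε i then 1 else -1
lemma abs_sg {n : ℕ} (ε : Fin n → Bool) (i : Fin n) : |sg ε i| = 1 := by
  unfold sg; split <;> norm_num
lemma sg_cases {n : ℕ} (ε : Fin n → Bool) (i : Fin n) : sg ε i = 1 ∨ sg ε i = -1 := by
  unfold sg; split <;> simp
def flip {n : ℕ} (k : Fin n) (ε : Fin n → Bool) : Fin n → Bool :=
  Function.update ε k (!ε k)
lemma flip_invol {n : ℕ} (k : Fin n) : Function.Involutive (flip k) := by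
  intro ε; funext i
  rcases eq_or_ne i k with rfl | h
  · simp [flip]
  · simp [flip, Function.update_of_ne h]
lemma sg_flip_self {n : ℕ} (ε : Fin n → Bool) (k : Fin n) :
    sg (flip k ε) k = -sg ε k := by
  unfold sg flip
  simp only [Function.update_self]
  cases ε k <;> simp
lemma sg_flip_ne {n : ℕ} (ε : Fin n → Bool) (k i : Fin n) (h : i ≠ k) :
    sg (flip k ε) i = sg ε i := by
  unfold sg flip
  rw [Function.update_of_ne h]
lemma sum_flip {n : ℕ} (k : Fin n) (f : (Fin n → Bool) → ℝ) :
    ∑ ε : Fin n → Bool, f (flip k ε) = ∑ ε : Fin n → Bool, f ε :=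
  Equiv.sum_comp ((flip_invol k).toPerm _) f

section Contraction
variable {ι : Type*} [Nonempty ι] {n : ℕ}

/-- The quantity `∑_ε sup_a ∑_i sg ε i * g i (v a i)`. -/
def Fs (v : ι → Fin n → ℝ) (g : Fin n → ℝ → ℝ) : ℝ :=
  ∑ ε : Fin n → Bool, sSup (Set.range fun a => ∑ i, sg ε i * g i (v a i))

lemma bdd_range (v : ι → Fin n → ℝ) (M : ℝ) (hv : ∀ a i, |v a i| ≤ M)
    (g : Fin n → ℝ → ℝ) (hg : ∀ i t, |t| ≤ M → |g i t| ≤ M) (ε : Fin n → Bool) :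
    BddAbove (Set.range fun a => ∑ i, sg ε i * g i (v a i)) := by
  refine ⟨n * M, ?_⟩
  rintro x ⟨a, rfl⟩
  calc (∑ i, sg ε i * g i (v a i)) ≤ ∑ _i : Fin n, M := by
        apply Finset.sum_le_sum
        intro i _
        calc sg ε i * g i (v a i) ≤ |sg ε i * g i (v a i)| := le_abs_self _
          _ = |g i (v a i)| := by rw [abs_mul, abs_sg, one_mul]
          _ ≤ M := hg i _ (hv a i)
    _ = n * M := by simp [mul_comm]

lemma contraction_step (v : ι → Fin n → ℝ) (M : ℝ) (hv : ∀ a i, |v a i| ≤ M)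
    (g : Fin n → ℝ → ℝ) (hLip : ∀ i s t, |g i s - g i t| ≤ |s - t|)
    (hM : ∀ i t, |t| ≤ M → |g i t| ≤ M) (k : Fin n) :
    Fs v g ≤ Fs v (Function.update g k id) := by
  set g' := Function.update g k id with hg'
  have hM' : ∀ i t, |t| ≤ M → |g' i t| ≤ M := by
    intro i t ht
    rcases eq_or_ne i k with rfl | h
    · simpa [hg'] using ht
    · rw [hg', Function.update_of_ne h]; exact hM i t ht
  have hbd : ∀ ε, BddAbove (Set.range fun a => ∑ i, sg ε i * g i (v a i)) :=
    bdd_range v M hv g hM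
  have hbd' : ∀ ε, BddAbove (Set.range fun a => ∑ i, sg ε i * g' i (v a i)) :=
    bdd_range v M hv g' hM'
  -- decomposition
  have decomp : ∀ (h : Fin n → ℝ → ℝ) (ε : Fin n → Bool) (a : ι),
      (∑ i, sg ε i * h i (v a i))
        = sg ε k * h k (v a k) + ∑ i ∈ {k}ᶜ, sg ε i * h i (v a i) :=
    fun h ε a => Fintype.sum_eq_add_sum_compl k _
  have compl_flip : ∀ (h : Fin n → ℝ → ℝ) (ε : Fin n → Bool) (a : ι),
      (∑ i ∈ {k}ᶜ, sg (flip k ε) i * h i (v a i))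
        = ∑ i ∈ {k}ᶜ, sg ε i * h i (v a i) := by
    intro h ε a
    apply Finset.sum_congr rfl
    intro i hi
    rw [sg_flip_ne ε k i (by simpa using hi)]
  have compl_g' : ∀ (ε : Fin n → Bool) (a : ι),
      (∑ i ∈ {k}ᶜ, sg ε i * g' i (v a i))
        = ∑ i ∈ {k}ᶜ, sg ε i * g i (v a i) := by
    intro ε a
    apply Finset.sum_congr rfl
    intro i hi
    rw [hg', Function.update_of_ne (by simpa using hi)]
  -- key pairwise inequality
  have key : ∀ ε : Fin n → Bool,
      sSup (Set.range fun a => ∑ i, sg ε i * g i (v a i))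
        + sSup (Set.range fun a => ∑ i, sg (flip k ε) i * g i (v a i))
      ≤ sSup (Set.range fun a => ∑ i, sg ε i * g' i (v a i))
        + sSup (Set.range fun a => ∑ i, sg (flip k ε) i * g' i (v a i)) := by
    intro ε
    have core : ∀ a b : ι,
        (∑ i, sg ε i * g i (v a i)) + (∑ i, sg (flip k ε) i * g i (v b i))
        ≤ sSup (Set.range fun a => ∑ i, sg ε i * g' i (v a i))
          + sSup (Set.range fun a => ∑ i, sg (flip k ε) i * g' i (v a i)) := by
      intro a b
      have hg'k : g' k = id := by rw [hg', Function.update_self]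
      have h1 : sg ε k * v a k + (∑ i ∈ {k}ᶜ, sg ε i * g i (v a i))
          ≤ sSup (Set.range fun a => ∑ i, sg ε i * g' i (v a i)) := by
        have h := le_csSup (hbd' ε) (Set.mem_range_self (f := fun a => ∑ i, sg ε i * g' i (v a i)) a)
        rw [decomp g' ε a, compl_g' ε a, hg'k] at h
        simpa using h
      have h2 : -sg ε k * v b k + (∑ i ∈ {k}ᶜ, sg ε i * g i (v b i))
          ≤ sSup (Set.range fun a => ∑ i, sg (flip k ε) i * g' i (v a i)) := by
        have h := le_csSup (hbd' (flip k ε))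
          (Set.mem_range_self (f := fun a => ∑ i, sg (flip k ε) i * g' i (v a i)) b)
        rw [decomp g' (flip k ε) b, compl_flip g' ε b, compl_g' ε b, sg_flip_self, hg'k] at h
        simpa using h
      have h3 : -sg ε k * v a k + (∑ i ∈ {k}ᶜ, sg ε i * g i (v a i))
          ≤ sSup (Set.range fun a => ∑ i, sg (flip k ε) i * g' i (v a i)) := by
        have h := le_csSup (hbd' (flip k ε))
          (Set.mem_range_self (f := fun a => ∑ i, sg (flip k ε) i * g' i (v a i)) a)
        rw [decomp g' (flip k ε) a, compl_flip g' ε a, compl_g' ε a, sg_flip_self, hg'k] at h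
        simpa using h
      have h4 : sg ε k * v b k + (∑ i ∈ {k}ᶜ, sg ε i * g i (v b i))
          ≤ sSup (Set.range fun a => ∑ i, sg ε i * g' i (v a i)) := by
        have h := le_csSup (hbd' ε) (Set.mem_range_self (f := fun a => ∑ i, sg ε i * g' i (v a i)) b)
        rw [decomp g' ε b, compl_g' ε b, hg'k] at h
        simpa using h
      rw [decomp g ε a, decomp g (flip k ε) b, compl_flip g ε b, sg_flip_self]
      have hlip : sg ε k * g k (v a k) - sg ε k * g k (v b k) ≤ |v a k - v b k| := by
        calc sg ε k * g k (v a k) - sg ε k * g k (v b k)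
            = sg ε k * (g k (v a k) - g k (v b k)) := by ring
          _ ≤ |sg ε k * (g k (v a k) - g k (v b k))| := le_abs_self _
          _ = |g k (v a k) - g k (v b k)| := by rw [abs_mul, abs_sg, one_mul]
          _ ≤ |v a k - v b k| := hLip k _ _
      rcases sg_cases ε k with hc | hc <;>
        rw [hc] at h1 h2 h3 h4 hlip ⊢ <;>
        rcases le_total (v b k) (v a k) with hab | hab
      · rw [abs_of_nonneg (sub_nonneg.2 hab)] at hlip
        linarith
      · rw [abs_of_nonpos (sub_nonpos.2 hab)] at hlip
        linarith
      · rw [abs_of_nonneg (sub_nonneg.2 hab)] at hlip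
        linarith
      · rw [abs_of_nonpos (sub_nonpos.2 hab)] at hlip
        linarith
    rw [← le_sub_iff_add_le]
    refine csSup_le (Set.range_nonempty _) ?_
    rintro x ⟨a, rfl⟩
    rw [le_sub_iff_add_le, add_comm, ← le_sub_iff_add_le]
    refine csSup_le (Set.range_nonempty _) ?_
    rintro y ⟨b, rfl⟩
    rw [le_sub_iff_add_le, add_comm]
    exact core a b
  have h2 : Fs v g + Fs v g ≤ Fs v g' + Fs v g' := by
    unfold Fs
    rw [← Finset.sum_add_distrib, ← Finset.sum_add_distrib]
    calc ∑ ε : Fin n → Bool,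
          (sSup (Set.range fun a => ∑ i, sg ε i * g i (v a i))
            + sSup (Set.range fun a => ∑ i, sg ε i * g i (v a i)))
        = ∑ ε : Fin n → Bool,
          (sSup (Set.range fun a => ∑ i, sg ε i * g i (v a i))
            + sSup (Set.range fun a => ∑ i, sg (flip k ε) i * g i (v a i))) := by
          rw [Finset.sum_add_distrib, Finset.sum_add_distrib]
          congr 1
          exact (sum_flip k fun ε => sSup (Set.range fun a => ∑ i, sg ε i * g i (v a i))).symm
      _ ≤ ∑ ε : Fin n → Bool,
          (sSup (Set.range fun a => ∑ i, sg ε i * g' i (v a i))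
            + sSup (Set.range fun a => ∑ i, sg (flip k ε) i * g' i (v a i))) :=
          Finset.sum_le_sum fun ε _ => key ε
      _ = _ := by
          rw [Finset.sum_add_distrib, Finset.sum_add_distrib]
          congr 1
          exact sum_flip k fun ε => sSup (Set.range fun a => ∑ i, sg ε i * g' i (v a i))
  linarith

lemma contraction (v : ι → Fin n → ℝ) (M : ℝ) (hv : ∀ a i, |v a i| ≤ M)
    (g : Fin n → ℝ → ℝ) (hLip : ∀ i s t, |g i s - g i t| ≤ |s - t|)
    (hM : ∀ i t, |t| ≤ M → |g i t| ≤ M) :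
    Fs v g ≤ Fs v (fun _ => id) := by
  have main : ∀ S : Finset (Fin n),
      Fs v g ≤ Fs v (fun i => if i ∈ S then id else g i) := by
    intro S
    induction S using Finset.induction_on with
    | empty => simp
    | @insert k S hk ih =>
        refine le_trans ih ?_
        have hLipS : ∀ i s t, |(fun i => if i ∈ S then id else g i) i s
            - (fun i => if i ∈ S then id else g i) i t| ≤ |s - t| := by
          intro i s t
          by_cases h : i ∈ S
          · simp [h]
          · simp only [h, if_false]
            exact hLip i s t
        have hMS : ∀ i t, |t| ≤ M → |(fun i => if i ∈ S then id else g i) i t| ≤ M := by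
          intro i t ht
          by_cases h : i ∈ S <;> simp only [h, if_true, if_false, id]
          · exact ht
          · exact hM i t ht
        have hstep := contraction_step v M hv _ hLipS hMS k
        have hupd : Function.update (fun i => if i ∈ S then id else g i) k id
            = fun i => if i ∈ insert k S then id else g i := by
          funext i
          rcases eq_or_ne i k with rfl | h
          · rw [Function.update_self]; simp [Finset.mem_insert]
          · rw [Function.update_of_ne h]; simp [Finset.mem_insert, h]
        rwa [hupd] at hstep
  have := main Finset.univ
  simpa using this

end Contraction

def negE {n : ℕ} (ε : Fin n → Bool) : Fin n → Bool := fun i => !ε i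

lemma negE_invol {n : ℕ} : Function.Involutive (negE (n := n)) := by
  intro ε; funext i; simp [negE]

lemma sg_negE {n : ℕ} (ε : Fin n → Bool) (i : Fin n) : sg (negE ε) i = -sg ε i := by
  unfold sg negE; cases ε i <;> simp

lemma sum_negE {n : ℕ} (f : (Fin n → Bool) → ℝ) :
    ∑ ε : Fin n → Bool, f (negE ε) = ∑ ε : Fin n → Bool, f ε :=
  Equiv.sum_comp (negE_invol.toPerm _) f

lemma cs_abs {d : ℕ} (u x : Fin d → ℝ) :
    |∑ k, u k * x k| ≤ Real.sqrt (∑ k, u k ^ 2) * Real.sqrt (∑ k, x k ^ 2) := by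
  have h := Finset.sum_mul_sq_le_sq_mul_sq Finset.univ u x
  have h1 : |∑ k, u k * x k| = Real.sqrt ((∑ k, u k * x k) ^ 2) :=
    (Real.sqrt_sq_eq_abs _).symm
  rw [h1, ← Real.sqrt_mul (by positivity)]
  exact Real.sqrt_le_sqrt h

lemma sum_sg_mul {n : ℕ} (i j : Fin n) :
    ∑ ε : Fin n → Bool, sg ε i * sg ε j = if i = j then (2:ℝ)^n else 0 := by
  rcases eq_or_ne i j with rfl | h
  · rw [if_pos rfl]
    have : ∀ ε : Fin n → Bool, sg ε i * sg ε i = 1 := by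
      intro ε; rcases sg_cases ε i with h | h <;> rw [h] <;> norm_num
    simp only [this, Finset.sum_const, Finset.card_univ, nsmul_eq_mul, mul_one]
    simp
  · rw [if_neg h]
    have key : ∑ ε : Fin n → Bool, sg ε i * sg ε j
        = -∑ ε : Fin n → Bool, sg ε i * sg ε j := by
      conv_lhs => rw [← sum_flip i (fun ε => sg ε i * sg ε j)]
      rw [← Finset.sum_neg_distrib]
      apply Finset.sum_congr rfl
      intro ε _
      rw [sg_flip_self, sg_flip_ne ε i j (Ne.symm h)]
      ring
    linarith


end Stmt19

namespace Stmt19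

lemma relu_abs_le (t : ℝ) : |relu t| ≤ |t| := by
  unfold relu
  rcases le_total t 0 with h | h
  · rw [max_eq_right h]; simp
  · rw [max_eq_left h]

lemma relu_lip (s t : ℝ) : |relu s - relu t| ≤ |s - t| := abs_max_sub_max_le_abs s t 0

lemma relu_smul (c t : ℝ) (hc : 0 ≤ c) : relu (c * t) = c * relu t := by
  unfold relu
  rcases le_total t 0 with h | h
  · rw [max_eq_right h, max_eq_right (mul_nonpos_of_nonneg_of_nonpos hc h), mul_zero]
  · rw [max_eq_left h, max_eq_left (mul_nonneg hc h)]

end Stmt19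

open Stmt19 in
theorem statement_19 (C B : ℝ) (hC : 0 < C) (hB : 0 < B) (m d n : ℕ) (hn : 0 < n)
    (X : Fin n → Fin d → ℝ) (hX : ∀ i, Real.sqrt (∑ k, X i k ^ 2) ≤ B) :
    rademacher n
        {g : (Fin d → ℝ) → ℝ | ∃ θ : Params2 m d,
          (∑ j, Real.sqrt (∑ k, θ.1 j k ^ 2) * |θ.2 j| ≤ C) ∧ g = mlp2nb θ} X
      ≤ 2 * C * B / Real.sqrt n := by
  classical
  set F : Set ((Fin d → ℝ) → ℝ) := {g : (Fin d → ℝ) → ℝ | ∃ θ : Params2 m d,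
          (∑ j, Real.sqrt (∑ k, θ.1 j k ^ 2) * |θ.2 j| ≤ C) ∧ g = mlp2nb θ} with hF
  set ι := {u : Fin d → ℝ // (∑ k, u k ^ 2) ≤ 1} with hι
  haveI : Nonempty ι := ⟨⟨fun _ => 0, by simp⟩⟩
  set v : ι → Fin n → ℝ := fun u i => ∑ k, u.1 k * X i k with hv_def
  have hv : ∀ (u : ι) (i : Fin n), |v u i| ≤ B := by
    intro u i
    calc |v u i| ≤ Real.sqrt (∑ k, u.1 k ^ 2) * Real.sqrt (∑ k, X i k ^ 2) := cs_abs _ _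
      _ ≤ 1 * B := mul_le_mul (Real.sqrt_le_one.mpr u.2) (hX i) (Real.sqrt_nonneg _) one_pos.le
      _ = B := one_mul B
  set N : (Fin n → Bool) → ℝ :=
    fun ε => sSup (Set.range fun u : ι => ∑ i, sg ε i * relu (v u i)) with hN_def
  set L : (Fin n → Bool) → ℝ :=
    fun ε => sSup (Set.range fun u : ι => ∑ i, sg ε i * v u i) with hL_def
  have hrM : ∀ (i : Fin n) (t : ℝ), |t| ≤ B → |relu t| ≤ B :=
    fun _ t ht => le_trans (relu_abs_le t) ht
  have bddN : ∀ ε, BddAbove (Set.range fun u : ι => ∑ i, sg ε i * relu (v u i)) :=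
    bdd_range v B hv (fun _ => relu) hrM
  have N_nonneg : ∀ ε, 0 ≤ N ε := by
    intro ε
    have h0 : (∑ i, sg ε i * relu (v (⟨fun _ => 0, by simp⟩ : ι) i)) = 0 := by
      apply Finset.sum_eq_zero
      intro i _
      have : v (⟨fun _ => 0, by simp⟩ : ι) i = 0 := by simp [hv_def]
      rw [this]
      simp [relu]
    have := le_csSup (bddN ε)
      (Set.mem_range_self (f := fun u : ι => ∑ i, sg ε i * relu (v u i))
        (⟨fun _ => 0, by simp⟩ : ι))
    rw [h0] at this
    exact this
  -- Step 1 : peel off the weights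
  have step1 : ∀ ε : Fin n → Bool,
      sSup ((fun f => ∑ i, sg ε i * f (X i)) '' F) ≤ C * (N ε + N (negE ε)) := by
    intro ε
    have hNN : 0 ≤ N ε + N (negE ε) := add_nonneg (N_nonneg ε) (N_nonneg _)
    apply Real.sSup_le _ (by positivity)
    rintro x ⟨g, hg, rfl⟩
    obtain ⟨θ, hθ, rfl⟩ := hg
    have swap : (∑ i, sg ε i * mlp2nb θ (X i))
        = ∑ j, θ.2 j * ∑ i, sg ε i * relu (∑ k, θ.1 j k * X i k) := by
      unfold mlp2nb
      simp_rw [Finset.mul_sum]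
      rw [Finset.sum_comm]
      apply Finset.sum_congr rfl
      intro j _
      apply Finset.sum_congr rfl
      intro i _
      ring
    show (∑ i, sg ε i * mlp2nb θ (X i)) ≤ C * (N ε + N (negE ε))
    rw [swap]
    have perj : ∀ j, θ.2 j * (∑ i, sg ε i * relu (∑ k, θ.1 j k * X i k))
        ≤ (Real.sqrt (∑ k, θ.1 j k ^ 2) * |θ.2 j|) * (N ε + N (negE ε)) := by
      intro j
      set r := Real.sqrt (∑ k, θ.1 j k ^ 2) with hr
      have hr0 : 0 ≤ r := Real.sqrt_nonneg _
      rcases eq_or_lt_of_le hr0 with hz | hp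
      · have hsum : (∑ k, θ.1 j k ^ 2) = 0 := by
          have h1 : (∑ k, θ.1 j k ^ 2) ≤ 0 := Real.sqrt_eq_zero'.1 hz.symm
          have h2 : 0 ≤ (∑ k, θ.1 j k ^ 2) := by positivity
          linarith
        have hw : ∀ k, θ.1 j k = 0 := by
          intro k
          have h := (Finset.sum_eq_zero_iff_of_nonneg
            (fun k _ => sq_nonneg (θ.1 j k))).1 hsum k (Finset.mem_univ k)
          exact pow_eq_zero_iff (by norm_num) |>.1 h
        have hrelu0 : ∀ i : Fin n, relu (∑ k, θ.1 j k * X i k) = 0 := by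
          intro i; simp [hw, relu]
        have hL0 : θ.2 j * (∑ i, sg ε i * relu (∑ k, θ.1 j k * X i k)) = 0 := by
          simp [hrelu0]
        rw [hL0, ← hz]
        have : ((0:ℝ) * |θ.2 j|) * (N ε + N (negE ε)) = 0 := by ring
        rw [this]
      · have hrsq : r ^ 2 = ∑ k, θ.1 j k ^ 2 := Real.sq_sqrt (by positivity)
        set u : ι := ⟨fun k => θ.1 j k / r, by
          have h1 : ∑ k, (θ.1 j k / r)^2 = (∑ k, θ.1 j k ^ 2) / r^2 := by
            simp_rw [div_pow]
            rw [← Finset.sum_div]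
          rw [h1, ← hrsq, div_self (by positivity)]⟩ with hu
        have hvu : ∀ i, v u i = (∑ k, θ.1 j k * X i k) / r := by
          intro i
          simp only [hv_def, hu]
          rw [Finset.sum_div]
          apply Finset.sum_congr rfl
          intro k _
          ring
        have hrelu : ∀ i, relu (∑ k, θ.1 j k * X i k) = r * relu (v u i) := by
          intro i
          rw [hvu i, ← relu_smul r _ hr0]
          congr 1
          field_simp
        set s := ∑ i, sg ε i * relu (v u i) with hs
        have hsN : s ≤ N ε := le_csSup (bddN ε)
          (Set.mem_range_self (f := fun u : ι => ∑ i, sg ε i * relu (v u i)) u)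
        have hsN' : -s ≤ N (negE ε) := by
          have hneg : -s = ∑ i, sg (negE ε) i * relu (v u i) := by
            rw [hs, ← Finset.sum_neg_distrib]
            apply Finset.sum_congr rfl
            intro i _
            rw [sg_negE]
            ring
          rw [hneg]
          exact le_csSup (bddN (negE ε))
            (Set.mem_range_self (f := fun u : ι => ∑ i, sg (negE ε) i * relu (v u i)) u)
        have habs : |s| ≤ N ε + N (negE ε) :=
          abs_le.2 ⟨by linarith [N_nonneg ε], by linarith [N_nonneg (negE ε)]⟩
        calc θ.2 j * (∑ i, sg ε i * relu (∑ k, θ.1 j k * X i k))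
            = θ.2 j * (r * s) := by
              rw [hs]
              congr 1
              rw [Finset.mul_sum]
              apply Finset.sum_congr rfl
              intro i _
              rw [hrelu i]
              ring
          _ ≤ |θ.2 j * (r * s)| := le_abs_self _
          _ = (r * |θ.2 j|) * |s| := by
              rw [abs_mul, abs_mul, abs_of_nonneg hr0]
              ring
          _ ≤ (r * |θ.2 j|) * (N ε + N (negE ε)) :=
              mul_le_mul_of_nonneg_left habs (by positivity)
    calc (∑ j, θ.2 j * ∑ i, sg ε i * relu (∑ k, θ.1 j k * X i k))
        ≤ ∑ j, (Real.sqrt (∑ k, θ.1 j k ^ 2) * |θ.2 j|) * (N ε + N (negE ε)) :=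
          Finset.sum_le_sum fun j _ => perj j
      _ = (∑ j, Real.sqrt (∑ k, θ.1 j k ^ 2) * |θ.2 j|) * (N ε + N (negE ε)) :=
          (Finset.sum_mul _ _ _).symm
      _ ≤ C * (N ε + N (negE ε)) := mul_le_mul_of_nonneg_right hθ hNN
  -- sum step 1 over ε
  have sum1 : (∑ ε : Fin n → Bool, sSup ((fun f => ∑ i, sg ε i * f (X i)) '' F))
      ≤ C * (2 * ∑ ε : Fin n → Bool, N ε) := by
    calc (∑ ε : Fin n → Bool, sSup ((fun f => ∑ i, sg ε i * f (X i)) '' F))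
        ≤ ∑ ε : Fin n → Bool, C * (N ε + N (negE ε)) :=
          Finset.sum_le_sum fun ε _ => step1 ε
      _ = C * ((∑ ε : Fin n → Bool, N ε) + ∑ ε : Fin n → Bool, N (negE ε)) := by
          rw [← Finset.mul_sum, Finset.sum_add_distrib]
      _ = C * (2 * ∑ ε : Fin n → Bool, N ε) := by
          rw [sum_negE (fun ε => N ε)]
          ring
  -- Step 2 : contraction
  have hcontr : (∑ ε : Fin n → Bool, N ε) ≤ ∑ ε : Fin n → Bool, L ε := by
    have h := contraction v B hv (fun _ => relu) (fun _ s t => relu_lip s t)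
      (fun _ t ht => le_trans (relu_abs_le t) ht)
    exact h
  -- Step 3 : Cauchy-Schwarz per epsilon
  have hL : ∀ ε : Fin n → Bool, L ε ≤ Real.sqrt (∑ k, (∑ i, sg ε i * X i k)^2) := by
    intro ε
    apply Real.sSup_le _ (Real.sqrt_nonneg _)
    rintro x ⟨u, rfl⟩
    have hswap : (∑ i, sg ε i * v u i) = ∑ k, u.1 k * (∑ i, sg ε i * X i k) := by
      simp only [hv_def]
      simp_rw [Finset.mul_sum]
      rw [Finset.sum_comm]
      apply Finset.sum_congr rfl
      intro k _
      apply Finset.sum_congr rfl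
      intro i _
      ring
    show (∑ i, sg ε i * v u i) ≤ Real.sqrt (∑ k, (∑ i, sg ε i * X i k)^2)
    rw [hswap]
    calc (∑ k, u.1 k * (∑ i, sg ε i * X i k))
        ≤ |∑ k, u.1 k * (∑ i, sg ε i * X i k)| := le_abs_self _
      _ ≤ Real.sqrt (∑ k, u.1 k ^ 2) * Real.sqrt (∑ k, (∑ i, sg ε i * X i k)^2) :=
          cs_abs _ _
      _ ≤ 1 * Real.sqrt (∑ k, (∑ i, sg ε i * X i k)^2) :=
          mul_le_mul_of_nonneg_right (Real.sqrt_le_one.mpr u.2) (Real.sqrt_nonneg _)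
      _ = _ := one_mul _
  -- Step 4 : orthogonality
  have horth : (∑ ε : Fin n → Bool, ∑ k, (∑ i, sg ε i * X i k)^2)
      = 2^n * ∑ i, ∑ k, X i k ^ 2 := by
    have expand : ∀ (ε : Fin n → Bool) (k : Fin d), (∑ i, sg ε i * X i k)^2
        = ∑ i, ∑ j, (sg ε i * sg ε j) * (X i k * X j k) := by
      intro ε k
      rw [sq, Finset.sum_mul_sum]
      apply Finset.sum_congr rfl
      intro i _
      apply Finset.sum_congr rfl
      intro j _
      ring
    simp_rw [expand]
    rw [Finset.sum_comm]
    have inner : ∀ k : Fin d,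
        (∑ ε : Fin n → Bool, ∑ i, ∑ j, (sg ε i * sg ε j) * (X i k * X j k))
        = 2^n * ∑ i, X i k ^ 2 := by
      intro k
      rw [Finset.sum_comm]
      have hi : ∀ i : Fin n,
          (∑ ε : Fin n → Bool, ∑ j, (sg ε i * sg ε j) * (X i k * X j k))
          = 2^n * X i k ^ 2 := by
        intro i
        rw [Finset.sum_comm]
        have hj : ∀ j : Fin n, (∑ ε : Fin n → Bool, (sg ε i * sg ε j) * (X i k * X j k))
            = (if i = j then (2:ℝ)^n else 0) * (X i k * X j k) := by
          intro j
          rw [← Finset.sum_mul, sum_sg_mul]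
        simp_rw [hj, ite_mul, zero_mul]
        rw [Finset.sum_ite_eq]
        simp [sq]
      simp_rw [hi]
      rw [← Finset.mul_sum]
    simp_rw [inner]
    rw [← Finset.mul_sum]
    congr 1
    rw [Finset.sum_comm]
  -- Step 5 : sum the square roots
  have hzsum : (∑ ε : Fin n → Bool, Real.sqrt (∑ k, (∑ i, sg ε i * X i k)^2))
      ≤ 2^n * (Real.sqrt n * B) := by
    set T := ∑ ε : Fin n → Bool, Real.sqrt (∑ k, (∑ i, sg ε i * X i k)^2) with hT
    have hT0 : 0 ≤ T := Finset.sum_nonneg fun ε _ => Real.sqrt_nonneg _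
    have hcs := Finset.sum_mul_sq_le_sq_mul_sq Finset.univ
      (fun _ : Fin n → Bool => (1:ℝ))
      (fun ε => Real.sqrt (∑ k, (∑ i, sg ε i * X i k)^2))
    simp only [one_mul, one_pow] at hcs
    have hcard : (∑ _ε : Fin n → Bool, (1:ℝ)) = 2^n := by
      rw [Finset.sum_const, Finset.card_univ]
      simp
    have hsq : ∀ ε : Fin n → Bool,
        (Real.sqrt (∑ k, (∑ i, sg ε i * X i k)^2))^2 = ∑ k, (∑ i, sg ε i * X i k)^2 :=
      fun ε => Real.sq_sqrt (by positivity)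
    have hTsq : T^2 ≤ 2^n * (2^n * ∑ i, ∑ k, X i k ^ 2) := by
      calc T^2 ≤ (∑ _ε : Fin n → Bool, (1:ℝ))
            * ∑ ε : Fin n → Bool, (Real.sqrt (∑ k, (∑ i, sg ε i * X i k)^2))^2 := hcs
        _ = 2^n * ∑ ε : Fin n → Bool, ∑ k, (∑ i, sg ε i * X i k)^2 := by
            rw [hcard]
            congr 1
            exact Finset.sum_congr rfl fun ε _ => hsq ε
        _ = 2^n * (2^n * ∑ i, ∑ k, X i k ^ 2) := by rw [horth]
    have hXB : (∑ i, ∑ k, X i k ^ 2) ≤ n * B^2 := by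
      calc (∑ i, ∑ k, X i k ^ 2) ≤ ∑ _i : Fin n, B^2 := by
            apply Finset.sum_le_sum
            intro i _
            calc (∑ k, X i k ^ 2)
                = Real.sqrt (∑ k, X i k ^ 2) * Real.sqrt (∑ k, X i k ^ 2) :=
                  (Real.mul_self_sqrt (by positivity)).symm
              _ ≤ B * B := mul_self_le_mul_self (Real.sqrt_nonneg _) (hX i)
              _ = B^2 := (sq B).symm
        _ = n * B^2 := by simp [mul_comm]
    have hRHS0 : (0:ℝ) ≤ 2^n * (Real.sqrt n * B) := by positivity
    have h2 : T^2 ≤ (2^n * (Real.sqrt n * B))^2 := by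
      have hexp : ((2:ℝ)^n * (Real.sqrt n * B))^2 = 2^n * (2^n * ((Real.sqrt n)^2 * B^2)) := by
        ring
      rw [hexp, Real.sq_sqrt (Nat.cast_nonneg n)]
      calc T^2 ≤ 2^n * (2^n * ∑ i, ∑ k, X i k ^ 2) := hTsq
        _ ≤ 2^n * (2^n * ((n:ℝ) * B^2)) := by
            apply mul_le_mul_of_nonneg_left _ (by positivity)
            exact mul_le_mul_of_nonneg_left hXB (by positivity)
    calc T = Real.sqrt (T^2) := (Real.sqrt_sq hT0).symm
      _ ≤ Real.sqrt ((2^n * (Real.sqrt n * B))^2) := Real.sqrt_le_sqrt h2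
      _ = 2^n * (Real.sqrt n * B) := Real.sqrt_sq hRHS0
  -- Final assembly
  have hsg : ∀ (ε : Fin n → Bool) (i : Fin n), (if ε i then (1:ℝ) else -1) = sg ε i :=
    fun _ _ => rfl
  unfold rademacher
  simp_rw [hsg]
  have hnum : (∑ ε : Fin n → Bool, sSup ((fun f => ∑ i, sg ε i * f (X i)) '' F))
      ≤ 2 * C * (2^n * (Real.sqrt n * B)) := by
    calc (∑ ε : Fin n → Bool, sSup ((fun f => ∑ i, sg ε i * f (X i)) '' F))
        ≤ C * (2 * ∑ ε : Fin n → Bool, N ε) := sum1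
      _ ≤ C * (2 * ∑ ε : Fin n → Bool, L ε) := by
          apply mul_le_mul_of_nonneg_left _ hC.le
          linarith [hcontr]
      _ ≤ C * (2 * ∑ ε : Fin n → Bool, Real.sqrt (∑ k, (∑ i, sg ε i * X i k)^2)) := by
          apply mul_le_mul_of_nonneg_left _ hC.le
          have hsum2 : (∑ ε : Fin n → Bool, L ε)
              ≤ ∑ ε : Fin n → Bool, Real.sqrt (∑ k, (∑ i, sg ε i * X i k)^2) :=
            Finset.sum_le_sum fun ε _ => hL ε
          linarith [hsum2]
      _ ≤ C * (2 * (2^n * (Real.sqrt n * B))) := by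
          apply mul_le_mul_of_nonneg_left _ hC.le
          linarith [hzsum]
      _ = 2 * C * (2^n * (Real.sqrt n * B)) := by ring
  have hden : (0:ℝ) < 2^n * n := by positivity
  rw [div_le_iff₀ hden]
  calc (∑ ε : Fin n → Bool, sSup ((fun f => ∑ i, sg ε i * f (X i)) '' F))
      ≤ 2 * C * (2^n * (Real.sqrt n * B)) := hnum
    _ = 2 * C * B / Real.sqrt n * (2^n * n) := by
        have hsn : (0:ℝ) < Real.sqrt n := Real.sqrt_pos.2 (by exact_mod_cast hn)
        field_simp
        exact Real.sq_sqrt (Nat.cast_nonneg n)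

end
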